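/- arXiv:math/0607761 — 4 statements merged into one kernel-verified Lean document; each statement's English description precedes it below -/
import Mathlib

section
/- Let A be a symmetric d×d real matrix, ξ ∈ ℝ^d a nonzero vector, B a symmetric d×d matrix, and define ψ(v) = ⟨ξ, v⟩ + vᵀBv. Let ζ = 4‖B‖/|ξ| where ‖B‖ is the operator norm. If 0 < ε < ζ⁻¹, then any v in the closed ball B̄(0,ε) at which ψ attains its maximum over B̄(0,ε) satisfies |v| = ε and |v − ε|ξ|⁻¹ξ| ≤ ζε². -/
open scoped RealInnerProductSpace
open Metric

/-!
Write the quadratic part as `⟪v, L v⟫` with `L` the operator of `B`, so that `|⟪x, L y⟫| ≤ ‖L‖‖x‖‖y‖`.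
An interior maximizer would be a critical point, and the derivative in the direction `ξ` is at least
`‖ξ‖² - 2‖L‖ε‖ξ‖ > 0`. On the sphere, compare with `w = ε|ξ|⁻¹ξ`: `ψ w ≤ ψ v` gives
`⟪ξ, w - v⟫ ≤ 2‖L‖ε‖v - w‖`, while `‖v - w‖² = 2ε|ξ|⁻¹⟪ξ, w - v⟫` because both points have norm `ε`.
Hence `‖v - w‖² ≤ ζε²‖v - w‖`.
-/

section
variable {E : Type*} [NormedAddCommGroup E] [InnerProductSpace ℝ E]

theorem abs_inner_apply_le (L : E →L[ℝ] E) (x y : E) : |⟪x, L y⟫| ≤ ‖L‖ * ‖x‖ * ‖y‖ :=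
  calc |⟪x, L y⟫| ≤ ‖x‖ * ‖L y‖ := abs_real_inner_le_norm _ _
    _ ≤ ‖x‖ * (‖L‖ * ‖y‖) := by gcongr; exact L.le_opNorm y
    _ = ‖L‖ * ‖x‖ * ‖y‖ := by ring

variable {L : E →L[ℝ] E} {ξ v : E} {ε : ℝ}

/-- The derivative in the direction `ξ` vanishes at `v`: `‖ξ‖² + ⟪v, L ξ⟫ + ⟪ξ, L v⟫ = 0`. -/
theorem norm_le_of_isLocalMax_inner_add_inner_apply_self
    (hv : IsLocalMax (fun x ↦ ⟪ξ, x⟫ + ⟪x, L x⟫) v) : ‖ξ‖ ≤ 2 * ‖L‖ * ‖v‖ := by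
  have hderiv := (innerSL ℝ ξ).hasFDerivAt.add ((hasFDerivAt_id v).inner ℝ L.hasFDerivAt)
  have hcrit := DFunLike.congr_fun (hv.hasFDerivAt_eq_zero hderiv) ξ
  simp only [add_apply, innerSL_apply_apply, ContinuousLinearMap.comp_apply,
    ContinuousLinearMap.prod_apply, fderivInnerCLM_apply, id, ContinuousLinearMap.id_apply,
    zero_apply, real_inner_self_eq_norm_sq] at hcrit
  have h1 := abs_le.mp (abs_inner_apply_le L v ξ)
  have h2 := abs_le.mp (abs_inner_apply_le L ξ v)
  rcases (norm_nonneg ξ).eq_or_lt with hξ | hξ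
  · rw [← hξ]; positivity
  · nlinarith

theorem norm_eq_of_isMaxOn_closedBall (hL : 2 * ‖L‖ * ε < ‖ξ‖) (hv : v ∈ closedBall 0 ε)
    (hmax : IsMaxOn (fun x ↦ ⟪ξ, x⟫ + ⟪x, L x⟫) (closedBall 0 ε) v) : ‖v‖ = ε := by
  rw [mem_closedBall_zero_iff] at hv
  refine hv.eq_of_not_lt fun hlt ↦ ?_
  have hloc := hmax.isLocalMax (closedBall_mem_nhds_of_mem (mem_ball_zero_iff.mpr hlt))
  have := norm_le_of_isLocalMax_inner_add_inner_apply_self hloc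
  nlinarith [norm_nonneg L]

theorem inner_sub_le_of_inner_add_inner_apply_self_le {w : E} (hv : ‖v‖ ≤ ε) (hw : ‖w‖ ≤ ε)
    (hle : ⟪ξ, w⟫ + ⟪w, L w⟫ ≤ ⟪ξ, v⟫ + ⟪v, L v⟫) : ⟪ξ, w - v⟫ ≤ 2 * ‖L‖ * ε * ‖v - w‖ := by
  have hsplit : ⟪v, L v⟫ - ⟪w, L w⟫ = ⟪v - w, L v⟫ + ⟪w, L (v - w)⟫ := by
    simp only [map_sub, inner_sub_left, inner_sub_right]; ring
  have h1 := (le_abs_self _).trans (abs_inner_apply_le L (v - w) v)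
  have h2 := (le_abs_self _).trans (abs_inner_apply_le L w (v - w))
  have hL := norm_nonneg L
  have hvw := norm_nonneg (v - w)
  rw [inner_sub_right]
  nlinarith [mul_le_mul_of_nonneg_left hv (mul_nonneg hL hvw),
    mul_le_mul_of_nonneg_left hw (mul_nonneg hL hvw)]

theorem norm_sub_smul_sq_of_norm_eq (hξ : ξ ≠ 0) (hv : ‖v‖ = ε) :
    ‖v - (ε / ‖ξ‖) • ξ‖ ^ 2 = 2 * ε / ‖ξ‖ * ⟪ξ, (ε / ‖ξ‖) • ξ - v⟫ := by
  have hξ' : ‖ξ‖ ≠ 0 := norm_ne_zero_iff.mpr hξ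
  rw [norm_sub_sq_real, hv, norm_smul, inner_sub_right, real_inner_smul_right,
    real_inner_smul_right, real_inner_self_eq_norm_sq, real_inner_comm, Real.norm_eq_abs, mul_pow, sq_abs]
  field_simp
  ring

theorem norm_sub_smul_le_of_isMaxOn_closedBall (hξ : ξ ≠ 0) (hv : ‖v‖ = ε)
    (hmax : IsMaxOn (fun x ↦ ⟪ξ, x⟫ + ⟪x, L x⟫) (closedBall 0 ε) v) :
    ‖v - (ε / ‖ξ‖) • ξ‖ ≤ 4 * ‖L‖ / ‖ξ‖ * ε ^ 2 := by
  set w := (ε / ‖ξ‖) • ξ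
  have hε : 0 ≤ ε := hv ▸ norm_nonneg v
  have hw : ‖w‖ = ε := by
    rw [norm_smul, Real.norm_eq_abs, abs_div, abs_norm, abs_of_nonneg hε,
      div_mul_cancel₀ _ (norm_ne_zero_iff.mpr hξ)]
  have hkey := inner_sub_le_of_inner_add_inner_apply_self_le hv.le hw.le
    (hmax (mem_closedBall_zero_iff.mpr hw.le))
  have hsq : ‖v - w‖ * ‖v - w‖ ≤ 4 * ‖L‖ / ‖ξ‖ * ε ^ 2 * ‖v - w‖ :=
    calc ‖v - w‖ * ‖v - w‖ = 2 * ε / ‖ξ‖ * ⟪ξ, w - v⟫ := by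
          rw [← sq, norm_sub_smul_sq_of_norm_eq hξ hv]
      _ ≤ 2 * ε / ‖ξ‖ * (2 * ‖L‖ * ε * ‖v - w‖) := by gcongr
      _ = 4 * ‖L‖ / ‖ξ‖ * ε ^ 2 * ‖v - w‖ := by ring
  rcases (norm_nonneg (v - w)).eq_or_lt with h | h
  · rw [← h]; positivity
  · exact le_of_mul_le_mul_right hsq h

end

theorem inner_toEuclideanCLM_eq_sum {n : Type*} [Fintype n] [DecidableEq n] (A : Matrix n n ℝ)
    (x y : EuclideanSpace ℝ n) :
    ⟪x, Matrix.toEuclideanCLM (𝕜 := ℝ) A y⟫ = ∑ i, ∑ j, x i * A i j * y j := by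
  simp only [Matrix.inner_toEuclideanCLM, dotProduct, Matrix.mulVec, Finset.mul_sum, mul_assoc]

theorem stmt0_general {d : ℕ} (B : Matrix (Fin d) (Fin d) ℝ)
    (ξ : EuclideanSpace ℝ (Fin d)) (hξ : ξ ≠ 0)
    (ψ : EuclideanSpace ℝ (Fin d) → ℝ)
    (hψ : ∀ v, ψ v = ⟪ξ, v⟫ + ∑ i, ∑ j, v i * B i j * v j)
    (ζ : ℝ) (hζ : ζ = 4 * ‖Matrix.toEuclideanCLM (𝕜 := ℝ) B‖ / ‖ξ‖)
    (ε : ℝ) (hε : 0 < ε) (hεζ : ε < ζ⁻¹)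
    (v : EuclideanSpace ℝ (Fin d)) (hv : v ∈ Metric.closedBall 0 ε)
    (hmax : IsMaxOn ψ (Metric.closedBall 0 ε) v) :
    ‖v‖ = ε ∧ ‖v - (ε / ‖ξ‖) • ξ‖ ≤ ζ * ε ^ 2 := by
  set L := Matrix.toEuclideanCLM (𝕜 := ℝ) B
  have hψL : ψ = fun x ↦ ⟪ξ, x⟫ + ⟪x, L x⟫ := by
    ext x; rw [hψ, inner_toEuclideanCLM_eq_sum]
  rw [hψL] at hmax
  have hζ_pos : 0 < ζ := by
    by_contra! h
    exact (inv_nonpos.mpr h).not_gt (hε.trans hεζ)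
  have hL : 4 * ‖L‖ * ε < ‖ξ‖ := by
    have hζε : ζ * ε < 1 := (lt_inv_mul_iff₀ hζ_pos).mp (by rwa [mul_one])
    rwa [hζ, div_mul_eq_mul_div, div_lt_one (norm_pos_iff.mpr hξ)] at hζε
  have hv_norm := norm_eq_of_isMaxOn_closedBall (by nlinarith [norm_nonneg L]) hv hmax
  exact ⟨hv_norm, hζ ▸ norm_sub_smul_le_of_isMaxOn_closedBall hξ hv_norm hmax⟩

/-- location of the maximizer of `ψ(v) = ⟨ξ, v⟩ + vᵀBv` over the
closed ball of radius `ε`: the maximizer lies on the sphere of radius `ε`, within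
distance `ζε²` of `ε|ξ|⁻¹ξ`, where `ζ = 4‖B‖/|ξ|`. -/
theorem stmt0 {d : ℕ} (B : Matrix (Fin d) (Fin d) ℝ) (hB : B.IsSymm)
    (ξ : EuclideanSpace ℝ (Fin d)) (hξ : ξ ≠ 0)
    (ψ : EuclideanSpace ℝ (Fin d) → ℝ)
    (hψ : ∀ v, ψ v = ⟪ξ, v⟫ + ∑ i, ∑ j, v i * B i j * v j)
    (ζ : ℝ) (hζ : ζ = 4 * ‖Matrix.toEuclideanCLM (𝕜 := ℝ) B‖ / ‖ξ‖)
    (ε : ℝ) (hε : 0 < ε) (hεζ : ε < ζ⁻¹)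
    (v : EuclideanSpace ℝ (Fin d)) (hv : v ∈ Metric.closedBall 0 ε)
    (hmax : IsMaxOn ψ (Metric.closedBall 0 ε) v) :
    ‖v‖ = ε ∧ ‖v - (ε / ‖ξ‖) • ξ‖ ≤ ζ * ε ^ 2 :=
  stmt0_general B ξ hξ ψ hψ ζ hζ ε hε hεζ v hv hmax
end

section
/- Let ξ ∈ ℝ^d be nonzero, B a symmetric matrix, ψ(v) = ⟨ξ,v⟩ + vᵀBv, ζ = 4‖B‖/|ξ|, and 0 < ε < ζ⁻¹. If v maximizes ψ over B̄(0,ε) and w = ε|ξ|⁻¹ξ, then ⟨w, v⟩ ≥ ε² − (ζ/2)ε²|v−w|, and consequently |v−w|² ≤ ζ ε² |v−w|. -/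
/-!
Since `v` maximizes `ψ`, `ψ w ≤ ψ v`, where `w` is the point of the ball at which `⟪ξ, ·⟫` is
largest. The quadratic part of `ψ` is `2ε‖B‖`-Lipschitz on the ball, so
`⟪ξ, v⟫ ≥ ε‖ξ‖ - 2ε‖B‖‖v - w‖`; rescaling by `ε / ‖ξ‖` gives the first inequality. The second
follows from `‖v - w‖² ≤ 2(ε² - ⟪w, v⟫)`, valid whenever `‖v‖, ‖w‖ ≤ ε`.
-/

open scoped RealInnerProductSpace

open Metric

section InnerProductSpace

variable {E : Type*} [NormedAddCommGroup E] [InnerProductSpace ℝ E]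

theorem inner_map_self_sub_inner_map_self_le (M : E →L[ℝ] E) (v w : E) :
    ⟪v, M v⟫ - ⟪w, M w⟫ ≤ ‖M‖ * (‖v‖ + ‖w‖) * ‖v - w‖ := by
  have hsplit : ⟪v, M v⟫ - ⟪w, M w⟫ = ⟪v - w, M v⟫ + ⟪w, M (v - w)⟫ := by
    simp only [inner_sub_left, map_sub, inner_sub_right]; ring
  have h₁ : ⟪v - w, M v⟫ ≤ ‖v - w‖ * (‖M‖ * ‖v‖) :=
    (real_inner_le_norm _ _).trans (by gcongr; exact M.le_opNorm v)
  have h₂ : ⟪w, M (v - w)⟫ ≤ ‖w‖ * (‖M‖ * ‖v - w‖) :=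
    (real_inner_le_norm _ _).trans (by gcongr; exact M.le_opNorm _)
  rw [hsplit]
  linarith

theorem norm_sub_sq_le_two_mul_sub_inner {v w : E} {ε : ℝ} (hv : ‖v‖ ≤ ε) (hw : ‖w‖ ≤ ε) :
    ‖v - w‖ ^ 2 ≤ 2 * (ε ^ 2 - ⟪w, v⟫) := by
  have hv0 : 0 ≤ ‖v‖ := norm_nonneg v
  have hw0 : 0 ≤ ‖w‖ := norm_nonneg w
  rw [norm_sub_sq_real, real_inner_comm]
  nlinarith

theorem norm_div_norm_smul_self {ξ : E} (hξ : ξ ≠ 0) {ε : ℝ} (hε : 0 ≤ ε) :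
    ‖(ε / ‖ξ‖) • ξ‖ = ε := by
  rw [norm_smul, Real.norm_of_nonneg (by positivity), div_mul_cancel₀ _ (norm_ne_zero_iff.mpr hξ)]

theorem inner_div_norm_smul_self {ξ : E} (hξ : ξ ≠ 0) (ε : ℝ) :
    ⟪ξ, (ε / ‖ξ‖) • ξ⟫ = ε * ‖ξ‖ := by
  rw [real_inner_smul_right, real_inner_self_eq_norm_sq]
  field_simp [norm_ne_zero_iff.mpr hξ]

theorem le_inner_of_isMaxOn_closedBall (M : E →L[ℝ] E) {ξ : E} (hξ : ξ ≠ 0) {ε : ℝ} {v : E}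
    (hv : ‖v‖ ≤ ε) (hmax : IsMaxOn (fun x ↦ ⟪ξ, x⟫ + ⟪x, M x⟫) (closedBall 0 ε) v) :
    ε ^ 2 - 2 * ‖M‖ / ‖ξ‖ * ε ^ 2 * ‖v - (ε / ‖ξ‖) • ξ‖ ≤ ⟪(ε / ‖ξ‖) • ξ, v⟫ := by
  set w := (ε / ‖ξ‖) • ξ
  have hε : 0 ≤ ε := (norm_nonneg v).trans hv
  have hw : ‖w‖ = ε := norm_div_norm_smul_self hξ hε
  have hψ : ⟪ξ, w⟫ + ⟪w, M w⟫ ≤ ⟪ξ, v⟫ + ⟪v, M v⟫ :=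
    hmax (mem_closedBall_zero_iff.mpr hw.le)
  have hquad : ⟪v, M v⟫ - ⟪w, M w⟫ ≤ 2 * ε * ‖M‖ * ‖v - w‖ := by
    calc ⟪v, M v⟫ - ⟪w, M w⟫ ≤ ‖M‖ * (‖v‖ + ‖w‖) * ‖v - w‖ :=
          inner_map_self_sub_inner_map_self_le M v w
      _ ≤ ‖M‖ * (ε + ε) * ‖v - w‖ := by gcongr; exact hw.le
      _ = 2 * ε * ‖M‖ * ‖v - w‖ := by ring
  have hlin : ε * ‖ξ‖ - 2 * ε * ‖M‖ * ‖v - w‖ ≤ ⟪ξ, v⟫ := by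
    have hξw : ⟪ξ, w⟫ = ε * ‖ξ‖ := inner_div_norm_smul_self hξ ε
    linarith
  calc ε ^ 2 - 2 * ‖M‖ / ‖ξ‖ * ε ^ 2 * ‖v - w‖
      = ε / ‖ξ‖ * (ε * ‖ξ‖ - 2 * ε * ‖M‖ * ‖v - w‖) := by field_simp
    _ ≤ ε / ‖ξ‖ * ⟪ξ, v⟫ := by gcongr
    _ = ⟪w, v⟫ := (real_inner_smul_left _ _ _).symm

end InnerProductSpace

theorem Matrix.sum_sum_mul_mul_eq_inner_toEuclideanCLM {n : Type*} [Fintype n] [DecidableEq n]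
    (B : Matrix n n ℝ) (x : EuclideanSpace ℝ n) :
    ∑ i, ∑ j, x i * B i j * x j = ⟪x, Matrix.toEuclideanCLM (𝕜 := ℝ) B x⟫ := by
  simp only [Matrix.inner_toEuclideanCLM, dotProduct, mulVec, Finset.mul_sum, mul_assoc]

theorem stmt2_general {d : ℕ} (B : Matrix (Fin d) (Fin d) ℝ)
    (ξ : EuclideanSpace ℝ (Fin d)) (hξ : ξ ≠ 0)
    (ψ : EuclideanSpace ℝ (Fin d) → ℝ)
    (hψ : ∀ v, ψ v = ⟪ξ, v⟫ + ∑ i, ∑ j, v i * B i j * v j)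
    (ζ : ℝ) (hζ : ζ = 4 * ‖Matrix.toEuclideanCLM (𝕜 := ℝ) B‖ / ‖ξ‖)
    (ε : ℝ)
    (v : EuclideanSpace ℝ (Fin d)) (hv : v ∈ Metric.closedBall 0 ε)
    (hmax : IsMaxOn ψ (Metric.closedBall 0 ε) v)
    (w : EuclideanSpace ℝ (Fin d)) (hw : w = (ε / ‖ξ‖) • ξ) :
    ⟪w, v⟫ ≥ ε ^ 2 - (ζ / 2) * ε ^ 2 * ‖v - w‖ ∧
      ‖v - w‖ ^ 2 ≤ ζ * ε ^ 2 * ‖v - w‖ := by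
  set M := Matrix.toEuclideanCLM (𝕜 := ℝ) B
  rw [mem_closedBall_zero_iff] at hv
  have hψM : ψ = fun x ↦ ⟪ξ, x⟫ + ⟪x, M x⟫ := by
    funext x; rw [hψ, Matrix.sum_sum_mul_mul_eq_inner_toEuclideanCLM]
  have hζ₂ : ζ / 2 = 2 * ‖M‖ / ‖ξ‖ := by rw [hζ]; ring
  have hinner : ⟪w, v⟫ ≥ ε ^ 2 - (ζ / 2) * ε ^ 2 * ‖v - w‖ := by
    rw [hζ₂, hw]; exact le_inner_of_isMaxOn_closedBall M hξ hv (hψM ▸ hmax)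
  have hwε : ‖w‖ ≤ ε := (hw ▸ norm_div_norm_smul_self hξ ((norm_nonneg v).trans hv)).le
  refine ⟨hinner, ?_⟩
  linarith [norm_sub_sq_le_two_mul_sub_inner hv hwε]

/-- the key scalar inequalities for the maximizer of
`ψ(v) = ⟨ξ,v⟩ + vᵀBv` over `B̄(0,ε)`: with `w = ε|ξ|⁻¹ξ`,
`⟨w,v⟩ ≥ ε² − (ζ/2)ε²|v−w|` and hence `|v−w|² ≤ ζε²|v−w|`. -/
theorem stmt2 {d : ℕ} (B : Matrix (Fin d) (Fin d) ℝ) (hB : B.IsSymm)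
    (ξ : EuclideanSpace ℝ (Fin d)) (hξ : ξ ≠ 0)
    (ψ : EuclideanSpace ℝ (Fin d) → ℝ)
    (hψ : ∀ v, ψ v = ⟪ξ, v⟫ + ∑ i, ∑ j, v i * B i j * v j)
    (ζ : ℝ) (hζ : ζ = 4 * ‖Matrix.toEuclideanCLM (𝕜 := ℝ) B‖ / ‖ξ‖)
    (ε : ℝ) (hε : 0 < ε) (hεζ : ε < ζ⁻¹)
    (v : EuclideanSpace ℝ (Fin d)) (hv : v ∈ Metric.closedBall 0 ε)
    (hmax : IsMaxOn ψ (Metric.closedBall 0 ε) v)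
    (w : EuclideanSpace ℝ (Fin d)) (hw : w = (ε / ‖ξ‖) • ξ) :
    ⟪w, v⟫ ≥ ε ^ 2 - (ζ / 2) * ε ^ 2 * ‖v - w‖ ∧
      ‖v - w‖ ^ 2 ≤ ζ * ε ^ 2 * ‖v - w‖ :=
  stmt2_general B ξ hξ ψ hψ ζ hζ ε v hv hmax w hw
end

section
/- Let b ∈ (1/2, 1] and let (Pₘ)ₘ≥1 be a sequence in (0,1] satisfying Pₘ ≥ bₘPₘ₋₁/(1 − bₘ + bₘPₘ₋₁) for all m ≥ 2, where bₘ → b and each bₘ ∈ (0,1]. Then lim inf Pₘ ≥ 2 − b⁻¹ > 0; in particular Pₘ is bounded below by a positive constant independent of m. -/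
open Filter

private lemma denom_pos {β x : ℝ} (hβ0 : 0 < β) (hβ1 : β ≤ 1) (hx0 : 0 < x) :
    0 < 1 - β + β * x := by nlinarith [mul_pos hβ0 hx0]

/-- monotonicity in β -/
private lemma mono_beta {β β' x : ℝ} (hβ0 : 0 < β) (hββ' : β ≤ β') (hβ'1 : β' ≤ 1)
    (hx0 : 0 < x) (hx1 : x ≤ 1) :
    β * x / (1 - β + β * x) ≤ β' * x / (1 - β' + β' * x) := by
  have hβ1 : β ≤ 1 := le_trans hββ' hβ'1
  have hd : 0 < 1 - β + β * x := denom_pos hβ0 hβ1 hx0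
  have hd' : 0 < 1 - β' + β' * x := denom_pos (lt_of_lt_of_le hβ0 hββ') hβ'1 hx0
  rw [div_le_div_iff₀ hd hd']
  nlinarith [mul_le_mul_of_nonneg_right hββ' hx0.le]

/-- key: f_β(x) ≥ min(x, 2 - β⁻¹) -/
private lemma key_min {β x : ℝ} (hβ0 : 0 < β) (hβ1 : β ≤ 1) (hx0 : 0 < x) (hx1 : x ≤ 1) :
    min x (2 - β⁻¹) ≤ β * x / (1 - β + β * x) := by
  have hd : 0 < 1 - β + β * x := denom_pos hβ0 hβ1 hx0
  have hββ : β * β⁻¹ = 1 := mul_inv_cancel₀ hβ0.ne'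
  rcases le_total x (2 - β⁻¹) with h | h
  · refine le_trans (min_le_left _ _) ?_
    rw [le_div_iff₀ hd]
    nlinarith [mul_le_mul_of_nonneg_left h hβ0.le, mul_pos hx0 hβ0]
  · refine le_trans (min_le_right _ _) ?_
    rw [le_div_iff₀ hd]
    nlinarith [mul_nonneg (by linarith : (0:ℝ) ≤ 1 - β)
      (by linarith : (0:ℝ) ≤ x - (2 - β⁻¹))]

/-- key growth: if x ≤ 2 - β⁻¹ - δ then f_β(x) ≥ x(1+βδ) -/
private lemma key_grow {β x δ : ℝ} (hβ0 : 0 < β) (hβ1 : β ≤ 1) (hx0 : 0 < x)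
    (hδ : 0 ≤ δ) (hxt : x ≤ 2 - β⁻¹ - δ) :
    x * (1 + β * δ) ≤ β * x / (1 - β + β * x) := by
  have hd : 0 < 1 - β + β * x := denom_pos hβ0 hβ1 hx0
  have hββ : β * β⁻¹ = 1 := mul_inv_cancel₀ hβ0.ne'
  rw [le_div_iff₀ hd]
  have h1 : 1 - β + β * x ≤ β * (1 - δ) := by
    nlinarith [mul_le_mul_of_nonneg_left hxt hβ0.le]
  have hpos : 0 ≤ x * (1 + β * δ) := by nlinarith [mul_nonneg hβ0.le hδ]
  have h2 : x * (1 + β * δ) * (1 - β + β * x) ≤ x * (1 + β * δ) * (β * (1 - δ)) :=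
    mul_le_mul_of_nonneg_left h1 hpos
  refine le_trans h2 ?_
  nlinarith [mul_nonneg (mul_nonneg hx0.le hδ) (by linarith : (0:ℝ) ≤ 1 - β),
    mul_nonneg (mul_nonneg (mul_pos hβ0 hβ0).le hx0.le) (mul_nonneg hδ hδ)]

/-- if `b ∈ (1/2,1]`, `Pₘ ∈ (0,1]` satisfies
`Pₘ ≥ bₘPₘ₋₁/(1−bₘ+bₘPₘ₋₁)` with `bₘ → b`, `bₘ ∈ (0,1]`, then
`lim inf Pₘ ≥ 2 − b⁻¹ > 0`; in particular `Pₘ` is bounded below by a positive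
constant independent of `m`. -/
theorem stmt10 (b : ℝ) (hb : b ∈ Set.Ioc (1 / 2 : ℝ) 1)
    (P : ℕ → ℝ) (hP : ∀ m : ℕ, 1 ≤ m → P m ∈ Set.Ioc (0 : ℝ) 1)
    (bs : ℕ → ℝ) (hbs : ∀ m : ℕ, bs m ∈ Set.Ioc (0 : ℝ) 1)
    (hbsb : Tendsto bs atTop (nhds b))
    (hrec : ∀ m : ℕ, 2 ≤ m →
      bs m * P (m - 1) / (1 - bs m + bs m * P (m - 1)) ≤ P m) :
    (2 - b⁻¹ ≤ liminf P atTop ∧ 0 < 2 - b⁻¹) ∧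
      ∃ c > 0, ∀ m : ℕ, 1 ≤ m → c ≤ P m := by
  obtain ⟨hb2, hb1⟩ := hb
  have hb0 : (0:ℝ) < b := by linarith
  have hbb : b * b⁻¹ = 1 := mul_inv_cancel₀ hb0.ne'
  have hbinv0 : 0 < b⁻¹ := inv_pos.2 hb0
  have htpos : 0 < 2 - b⁻¹ := by nlinarith
  -- main eventual lower bound
  have hevent : ∀ ε : ℝ, 0 < ε → ∀ᶠ m in atTop, 2 - b⁻¹ - ε ≤ P m := by
    intro ε hε
    by_cases hcase : 2 - b⁻¹ - ε ≤ 0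
    · filter_upwards [eventually_ge_atTop 1] with m hm
      linarith [(hP m hm).1]
    · push_neg at hcase
      set β : ℝ := (b⁻¹ + ε / 2)⁻¹ with hβdef
      have hden : 0 < b⁻¹ + ε / 2 := by linarith
      have hβ0 : 0 < β := inv_pos.2 hden
      have hβinv : β⁻¹ = b⁻¹ + ε / 2 := inv_inv _
      have hββ : β * β⁻¹ = 1 := mul_inv_cancel₀ hβ0.ne'
      have hβb : β < b := by
        rw [show b = (b⁻¹)⁻¹ from (inv_inv b).symm]
        exact inv_strictAnti₀ hbinv0 (by linarith)
      have hβ1 : β ≤ 1 := le_trans hβb.le hb1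
      set δ : ℝ := ε / 2 with hδdef
      have hδ0 : 0 < δ := by positivity
      -- eventually bs m ≥ β
      obtain ⟨M, hM⟩ := eventually_atTop.1 (hbsb.eventually (eventually_ge_nhds hβb))
      set M' : ℕ := max M 2 with hM'def
      have hM'2 : 2 ≤ M' := le_max_right _ _
      set m0 : ℕ := M' - 1 with hm0def
      have hm01 : 1 ≤ m0 := by omega
      -- one-step bound
      have hstep : ∀ n : ℕ, m0 ≤ n → β * P n / (1 - β + β * P n) ≤ P (n + 1) := by
        intro n hn
        have hn1 : 1 ≤ n := le_trans hm01 hn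
        have hPn := hP n hn1
        have hbsn := hbs (n + 1)
        have hβbs : β ≤ bs (n + 1) := hM (n + 1) (by omega)
        have h1 := hrec (n + 1) (by omega)
        simp only [Nat.add_sub_cancel] at h1
        exact le_trans (mono_beta hβ0 hβbs hbsn.2 hPn.1 hPn.2) h1
      -- reach the target zone
      have hreach : ∃ n : ℕ, m0 ≤ n ∧ 2 - β⁻¹ - δ ≤ P n := by
        by_contra hcon
        push_neg at hcon
        have hgrow : ∀ k : ℕ, P m0 * (1 + β * δ) ^ k ≤ P (m0 + k) := by
          intro k
          induction k with
          | zero => simp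
          | succ k ih =>
            have hPk := hP (m0 + k) (by omega)
            have h1 : P (m0 + k) * (1 + β * δ) ≤ P (m0 + k + 1) :=
              le_trans (key_grow hβ0 hβ1 hPk.1 hδ0.le
                (le_of_lt (hcon (m0 + k) (by omega)))) (hstep (m0 + k) (by omega))
            have h2 : 0 < 1 + β * δ := by nlinarith
            calc P m0 * (1 + β * δ) ^ (k + 1)
                = (P m0 * (1 + β * δ) ^ k) * (1 + β * δ) := by ring
              _ ≤ P (m0 + k) * (1 + β * δ) := mul_le_mul_of_nonneg_right ih h2.le
              _ ≤ P (m0 + (k + 1)) := by rw [← Nat.add_assoc]; exact h1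
        have hP0 := hP m0 hm01
        obtain ⟨k, hk⟩ := pow_unbounded_of_one_lt (1 / P m0)
          (by nlinarith [mul_pos hβ0 hδ0] : (1:ℝ) < 1 + β * δ)
        have : 1 < P m0 * (1 + β * δ) ^ k := by
          rw [div_lt_iff₀ hP0.1] at hk; nlinarith
        have := hgrow k
        have hPk := hP (m0 + k) (by omega)
        linarith [hPk.2]
      obtain ⟨n, hn0, hn2⟩ := hreach
      -- stay in the target zone
      have hstay : ∀ k : ℕ, 2 - β⁻¹ - δ ≤ P (n + k) := by
        intro k
        induction k with
        | zero => simpa using hn2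
        | succ k ih =>
          have hPk := hP (n + k) (by omega)
          have h1 : min (P (n + k)) (2 - β⁻¹) ≤ P (n + k + 1) :=
            le_trans (key_min hβ0 hβ1 hPk.1 hPk.2) (hstep (n + k) (by omega))
          have h2 : 2 - β⁻¹ - δ ≤ min (P (n + k)) (2 - β⁻¹) :=
            le_min ih (by linarith)
          rw [← Nat.add_assoc]
          exact le_trans h2 h1
      rw [eventually_atTop]
      refine ⟨n, fun m hm => ?_⟩
      obtain ⟨k, rfl⟩ := Nat.exists_eq_add_of_le hm
      have := hstay k
      rw [hβinv] at this
      linarith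
  constructor
  · constructor
    · refine le_of_forall_pos_le_add fun ε hε => ?_
      have h1 : 2 - b⁻¹ - ε ≤ liminf P atTop := by
        refine le_liminf_of_le ?_ (hevent ε hε)
        exact isCoboundedUnder_ge_of_eventually_le atTop
          (x := 1) ((eventually_ge_atTop 1).mono fun m hm => (hP m hm).2)
      linarith
    · exact htpos
  · obtain ⟨N, hN⟩ := eventually_atTop.1 (hevent ((2 - b⁻¹) / 2) (by linarith))
    have hne : (Finset.Icc 1 (N + 1)).Nonempty := ⟨1, by simp⟩
    set c2 : ℝ := (Finset.Icc 1 (N + 1)).inf' hne P with hc2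
    have hc2pos : 0 < c2 := by
      rw [hc2, Finset.lt_inf'_iff]
      intro i hi
      exact (hP i (Finset.mem_Icc.1 hi).1).1
    refine ⟨min ((2 - b⁻¹) / 2) c2, lt_min (by linarith) hc2pos, fun m hm => ?_⟩
    rcases le_or_gt N m with h | h
    · have := hN m h
      calc min ((2 - b⁻¹) / 2) c2 ≤ (2 - b⁻¹) / 2 := min_le_left _ _
        _ ≤ P m := by linarith
    · calc min ((2 - b⁻¹) / 2) c2 ≤ c2 := min_le_right _ _
        _ ≤ P m := Finset.inf'_le _ (Finset.mem_Icc.2 ⟨hm, by omega⟩)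
end

section
/- Let (Mₖ) be a nonnegative submartingale with M₀ = u(x₀) deterministic, let τ be a stopping time, and suppose Mₖ = u(xₖ) + ckε³ where u is bounded by ‖u‖_∞ and c, ε > 0. Suppose moreover that M²ₖ − M₀² − c₂ε²k is a submartingale. Then for every k, c₂ k ε² P(τ ≥ k) ≤ E[M²_{τ∧k} − M₀²] ≤ 8‖u‖²_∞ + 2c²k²ε⁶, and there exists a (independent of ε ≤ 1 and x₀) with P(τ > aε⁻²) ≤ 1/2 whenever aε ≤ 1. -/
open MeasureTheory

set_option maxHeartbeats 1000000 in
/-- the exit-time estimate: if `Mₖ = U(xₖ) + ckε³` is a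
nonnegative submartingale with `|U| ≤ K`, `M₀` deterministic, and
`Mₖ² − M₀² − c₂ε²k` a submartingale, then
`c₂kε²P(τ ≥ k) ≤ E[M²_{τ∧k} − M₀²] ≤ 8K² + 2c²k²ε⁶` for every `k`, and
consequently there is `a` (given explicitly in terms of `K, c, c₂` only, hence
independent of `ε ≤ 1` and of the starting point) with `P(τ > aε⁻²) ≤ 1/2`
whenever `aε ≤ 1`. -/
theorem stmt15 {Ω : Type*} {m0 : MeasurableSpace Ω} {μ : Measure Ω}
    [IsProbabilityMeasure μ] (ℱ : Filtration ℕ m0)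
    (M U : ℕ → Ω → ℝ) (τ : Ω → ℕ) (hτ : IsStoppingTime ℱ (fun ω => (τ ω : WithTop ℕ)))
    (c c₂ ε K : ℝ) (hc : 0 < c) (hc₂ : 0 < c₂) (hε : 0 < ε) (hε1 : ε ≤ 1)
    (hK : 0 < K)
    (hMdef : ∀ k ω, M k ω = U k ω + c * k * ε ^ 3)
    (hUbd : ∀ k ω, |U k ω| ≤ K)
    (hM : Submartingale M ℱ μ)
    (hnonneg : ∀ k ω, 0 ≤ M k ω)
    (m₀ : ℝ) (hdet : ∀ ω, M 0 ω = m₀)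
    (hsub2 : Submartingale
      (fun k ω => (M k ω) ^ 2 - (M 0 ω) ^ 2 - c₂ * ε ^ 2 * k) ℱ μ) :
    (∀ k : ℕ,
        c₂ * k * ε ^ 2 * (μ {ω | k ≤ τ ω}).toReal ≤
          ∫ ω, ((M (min (τ ω) k) ω) ^ 2 - (M 0 ω) ^ 2) ∂μ ∧
        ∫ ω, ((M (min (τ ω) k) ω) ^ 2 - (M 0 ω) ^ 2) ∂μ ≤
          8 * K ^ 2 + 2 * c ^ 2 * k ^ 2 * ε ^ 6) ∧
      (((16 * K ^ 2 + 8 * c ^ 2 + 1) / c₂ + 1) * ε ≤ 1 →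
        (μ {ω | ((16 * K ^ 2 + 8 * c ^ 2 + 1) / c₂ + 1) / ε ^ 2 <
            (τ ω : ℝ)}).toReal ≤ 1 / 2) := by
  have key : ∀ k : ℕ,
      c₂ * k * ε ^ 2 * (μ {ω | k ≤ τ ω}).toReal ≤
        ∫ ω, ((M (min (τ ω) k) ω) ^ 2 - (M 0 ω) ^ 2) ∂μ ∧
      ∫ ω, ((M (min (τ ω) k) ω) ^ 2 - (M 0 ω) ^ 2) ∂μ ≤
        8 * K ^ 2 + 2 * c ^ 2 * k ^ 2 * ε ^ 6 := by
    intro k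
    set f : ℕ → Ω → ℝ := fun k ω => (M k ω) ^ 2 - (M 0 ω) ^ 2 - c₂ * ε ^ 2 * k with hf
    set σ : Ω → ℕ := fun ω => min (τ ω) k with hσdef
    have hσ : IsStoppingTime ℱ (fun ω => (σ ω : WithTop ℕ)) := by
      have := hτ.min_const k
      convert this using 1
      · rfl
      · funext ω; exact WithTop.coe_min _ _
    have hσle : ∀ ω, σ ω ≤ k := fun ω => min_le_right _ _
    have hσmeas : Measurable σ := by
      refine measurable_to_countable' fun n => ?_
      have := hσ.measurable' (measurableSet_singleton (n : WithTop ℕ))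
      convert this using 1
      ext ω; simp
    have hintf : Integrable (stoppedValue f (fun ω => (σ ω : WithTop ℕ))) μ :=
      hsub2.integrable_stoppedValue hσ (N := k) (fun ω => WithTop.coe_le_coe.2 (hσle ω))
    -- integrand as a function
    have hg_eq : (fun ω => (M (σ ω) ω) ^ 2 - (M 0 ω) ^ 2)
        = fun ω => stoppedValue f (fun ω => (σ ω : WithTop ℕ)) ω + c₂ * ε ^ 2 * (σ ω : ℝ) := by
      funext ω; show _ = f (σ ω) ω + _; simp only [hf]; ring
    have hinth : Integrable (fun ω => c₂ * ε ^ 2 * (σ ω : ℝ)) μ := by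
      refine Integrable.const_mul ?_ _
      have : Measurable fun ω => (σ ω : ℝ) := measurable_from_nat.comp hσmeas
      refine ⟨this.aestronglyMeasurable, ?_⟩
      refine HasFiniteIntegral.of_bounded (C := (k : ℝ)) (Filter.Eventually.of_forall fun ω => ?_)
      rw [Real.norm_eq_abs, abs_of_nonneg (by positivity)]
      exact_mod_cast hσle ω
    have hintg : Integrable (fun ω => (M (σ ω) ω) ^ 2 - (M 0 ω) ^ 2) μ := by
      rw [hg_eq]; exact hintf.add hinth
    -- optional stopping: E[f_0] ≤ E[f_σ]
    have hos : (0:ℝ) ≤ ∫ ω, stoppedValue f (fun ω => (σ ω : WithTop ℕ)) ω ∂μ := by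
      have h0 : IsStoppingTime ℱ (fun _ : Ω => ((0:ℕ) : WithTop ℕ)) := isStoppingTime_const ℱ 0
      have := hsub2.expected_stoppedValue_mono h0 hσ
        (fun ω => WithTop.coe_le_coe.2 (Nat.zero_le (σ ω))) (N := k)
        (fun ω => WithTop.coe_le_coe.2 (hσle ω))
      have h00 : ∫ ω, stoppedValue f (fun _ => ((0:ℕ) : WithTop ℕ)) ω ∂μ = 0 := by
        simp [stoppedValue, hf]
      calc (0:ℝ) = ∫ ω, stoppedValue f (fun _ => ((0:ℕ) : WithTop ℕ)) ω ∂μ := h00.symm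
        _ ≤ _ := this
    constructor
    · -- lower bound
      have step1 : c₂ * k * ε ^ 2 * (μ {ω | k ≤ τ ω}).toReal
          ≤ ∫ ω, c₂ * ε ^ 2 * (σ ω : ℝ) ∂μ := by
        have hmeas : MeasurableSet {ω | k ≤ τ ω} := by
          have := ℱ.le k _ (hτ.measurableSet_ge_of_countable k); simpa using this
        have h1 : c₂ * k * ε ^ 2 * (μ {ω | k ≤ τ ω}).toReal
            = ∫ ω in {ω | k ≤ τ ω}, c₂ * ε ^ 2 * (k : ℝ) ∂μ := by
          rw [setIntegral_const, smul_eq_mul, measureReal_def]; ring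
        rw [h1]
        have h2 : ∫ ω in {ω | k ≤ τ ω}, c₂ * ε ^ 2 * (k : ℝ) ∂μ
            = ∫ ω in {ω | k ≤ τ ω}, c₂ * ε ^ 2 * (σ ω : ℝ) ∂μ := by
          refine setIntegral_congr_fun hmeas fun ω hω => ?_
          have : σ ω = k := min_eq_right hω
          rw [this]
        rw [h2]
        refine setIntegral_le_integral hinth (Filter.Eventually.of_forall fun ω => ?_)
        positivity
      calc c₂ * k * ε ^ 2 * (μ {ω | k ≤ τ ω}).toReal
          ≤ ∫ ω, c₂ * ε ^ 2 * (σ ω : ℝ) ∂μ := step1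
        _ ≤ ∫ ω, stoppedValue f (fun ω => (σ ω : WithTop ℕ)) ω ∂μ + ∫ ω, c₂ * ε ^ 2 * (σ ω : ℝ) ∂μ := by linarith
        _ = ∫ ω, ((M (σ ω) ω) ^ 2 - (M 0 ω) ^ 2) ∂μ := by
            rw [hg_eq, integral_add hintf hinth]
    · -- upper bound
      have hbd : ∀ ω, (M (σ ω) ω) ^ 2 - (M 0 ω) ^ 2 ≤ (K + c * k * ε ^ 3) ^ 2 := by
        intro ω
        have h1 : M (σ ω) ω ≤ K + c * k * ε ^ 3 := by
          rw [hMdef]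
          have := (abs_le.1 (hUbd (σ ω) ω)).2
          have hck : (σ ω : ℝ) ≤ k := by exact_mod_cast hσle ω
          have h2 : c * (σ ω : ℝ) * ε ^ 3 ≤ c * k * ε ^ 3 :=
            mul_le_mul_of_nonneg_right (mul_le_mul_of_nonneg_left hck hc.le) (by positivity)
          linarith
        have h0 := hnonneg (σ ω) ω
        nlinarith [sq_nonneg (M 0 ω)]
      calc ∫ ω, ((M (σ ω) ω) ^ 2 - (M 0 ω) ^ 2) ∂μ
          ≤ ∫ _ω, (K + c * k * ε ^ 3) ^ 2 ∂μ :=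
            integral_mono hintg (integrable_const _) hbd
        _ = (K + c * k * ε ^ 3) ^ 2 := by simp
        _ ≤ 8 * K ^ 2 + 2 * c ^ 2 * k ^ 2 * ε ^ 6 := by nlinarith [sq_nonneg (K - c * k * ε ^ 3)]
  refine ⟨key, ?_⟩
  intro ha
  set D : ℝ := 16 * K ^ 2 + 8 * c ^ 2 + 1 with hDdef
  set a : ℝ := D / c₂ + 1 with hadef
  have hD0 : 0 < D := by positivity
  have ha0 : 0 < a := by positivity
  have hε2 : 0 < ε ^ 2 := by positivity
  set k : ℕ := ⌊a / ε ^ 2⌋₊ + 1 with hkdef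
  have hk1 : a / ε ^ 2 < (k : ℝ) := by
    have h := Nat.lt_floor_add_one (a / ε ^ 2)
    rw [hkdef]; push_cast; linarith
  have hk2 : (k : ℝ) ≤ a / ε ^ 2 + 1 := by
    have := Nat.floor_le (le_of_lt (div_pos ha0 hε2))
    push_cast [hkdef]; linarith
  have hsubset : {ω | a / ε ^ 2 < (τ ω : ℝ)} ⊆ {ω | k ≤ τ ω} := by
    intro ω hω
    have : ⌊a / ε ^ 2⌋₊ < τ ω := by
      rw [Nat.floor_lt (le_of_lt (div_pos ha0 hε2))]; exact hω
    simpa [hkdef] using this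
  have hmono : (μ {ω | a / ε ^ 2 < (τ ω : ℝ)}).toReal ≤ (μ {ω | k ≤ τ ω}).toReal :=
    ENNReal.toReal_mono (measure_ne_top _ _) (measure_mono hsubset)
  -- arithmetic facts
  have hka : a < (k : ℝ) * ε ^ 2 := by
    rw [div_lt_iff₀ hε2] at hk1; linarith
  have ht0 : 0 < c₂ * k * ε ^ 2 := by
    have : (0:ℝ) < k := by positivity
    positivity
  have htD : D ≤ c₂ * k * ε ^ 2 := by
    have h1 : D ≤ c₂ * a := by
      rw [hadef]; rw [mul_add, mul_div_cancel₀ _ (ne_of_gt hc₂)]; nlinarith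
    nlinarith
  have hεD : ε * D ≤ c₂ := by
    have h1 : D / c₂ * ε ≤ a * ε := by nlinarith
    have h2 : D / c₂ * ε ≤ 1 := le_trans h1 ha
    rw [div_mul_eq_mul_div, div_le_one hc₂] at h2; linarith [mul_comm ε D]
  have hkε4 : (k : ℝ) * ε ^ 4 ≤ 2 * ε := by
    have h1 : (k : ℝ) * ε ^ 4 ≤ (a / ε ^ 2 + 1) * ε ^ 4 :=
      mul_le_mul_of_nonneg_right hk2 (by positivity)
    have h2 : (a / ε ^ 2 + 1) * ε ^ 4 = a * ε ^ 2 + ε ^ 4 := by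
      field_simp
    have h3 : a * ε ^ 2 ≤ ε := by nlinarith
    have h4 : ε ^ 4 ≤ ε := by
      have := pow_le_pow_of_le_one hε.le hε1 (show 1 ≤ 4 by norm_num)
      simpa using this
    linarith [h1, h2 ▸ h1]
  have hkD : (k : ℝ) * ε ^ 4 * D ≤ 2 * c₂ := by
    calc (k : ℝ) * ε ^ 4 * D ≤ 2 * ε * D :=
          mul_le_mul_of_nonneg_right hkε4 hD0.le
      _ = 2 * (ε * D) := by ring
      _ ≤ 2 * c₂ := by linarith
  have hmain : 8 * K ^ 2 + 2 * c ^ 2 * (k:ℝ) ^ 2 * ε ^ 6 ≤ c₂ * k * ε ^ 2 * (1 / 2) := by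
    have hx0 : (0:ℝ) ≤ (k:ℝ) * ε ^ 2 := by positivity
    have e1 : 8 * K ^ 2 * D ≤ 8 * K ^ 2 * (c₂ * (k:ℝ) * ε ^ 2) :=
      mul_le_mul_of_nonneg_left htD (by positivity)
    have h2c : (0:ℝ) ≤ 2 * c ^ 2 := by positivity
    have e2 : 2 * c ^ 2 * (k:ℝ) ^ 2 * ε ^ 6 * D ≤ 4 * c ^ 2 * c₂ * ((k:ℝ) * ε ^ 2) := by
      calc 2 * c ^ 2 * (k:ℝ) ^ 2 * ε ^ 6 * D
          = 2 * c ^ 2 * ((k:ℝ) * ε ^ 4 * D) * ((k:ℝ) * ε ^ 2) := by ring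
        _ ≤ 2 * c ^ 2 * (2 * c₂) * ((k:ℝ) * ε ^ 2) :=
            mul_le_mul_of_nonneg_right (mul_le_mul_of_nonneg_left hkD h2c) hx0
        _ = 4 * c ^ 2 * c₂ * ((k:ℝ) * ε ^ 2) := by ring
    have e3 : (8 * K ^ 2 + 2 * c ^ 2 * (k:ℝ) ^ 2 * ε ^ 6) * D
        ≤ (8 * K ^ 2 + 4 * c ^ 2) * (c₂ * (k:ℝ) * ε ^ 2) := by
      calc (8 * K ^ 2 + 2 * c ^ 2 * (k:ℝ) ^ 2 * ε ^ 6) * D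
          = 8 * K ^ 2 * D + 2 * c ^ 2 * (k:ℝ) ^ 2 * ε ^ 6 * D := by ring
        _ ≤ 8 * K ^ 2 * (c₂ * (k:ℝ) * ε ^ 2) + 4 * c ^ 2 * c₂ * ((k:ℝ) * ε ^ 2) :=
            add_le_add e1 e2
        _ = (8 * K ^ 2 + 4 * c ^ 2) * (c₂ * (k:ℝ) * ε ^ 2) := by ring
    have e4 : (8 * K ^ 2 + 4 * c ^ 2) ≤ D / 2 := by rw [hDdef]; nlinarith
    have e5 : (8 * K ^ 2 + 2 * c ^ 2 * (k:ℝ) ^ 2 * ε ^ 6) * D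
        ≤ (c₂ * (k:ℝ) * ε ^ 2 * (1 / 2)) * D := by
      calc (8 * K ^ 2 + 2 * c ^ 2 * (k:ℝ) ^ 2 * ε ^ 6) * D
          ≤ (8 * K ^ 2 + 4 * c ^ 2) * (c₂ * (k:ℝ) * ε ^ 2) := e3
        _ ≤ (D / 2) * (c₂ * (k:ℝ) * ε ^ 2) :=
            mul_le_mul_of_nonneg_right e4 (le_of_lt ht0)
        _ = (c₂ * (k:ℝ) * ε ^ 2 * (1 / 2)) * D := by ring
    exact le_of_mul_le_mul_right e5 hD0
  have hP : (μ {ω | k ≤ τ ω}).toReal ≤ 1 / 2 := by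
    have hchain : c₂ * k * ε ^ 2 * (μ {ω | k ≤ τ ω}).toReal
        ≤ c₂ * k * ε ^ 2 * (1 / 2) := le_trans (le_trans (key k).1 (key k).2) hmain
    exact le_of_mul_le_mul_left hchain ht0
  exact le_trans hmono hP
end
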